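/- arXiv:0810.0966 — 2 statements merged into one kernel-verified Lean document; each statement's English description precedes it below -/
import Mathlib

section
/- If the interior subgraph of a graph with boundary is connected, then the first Dirichlet eigenvalue ν(G) is a simple eigenvalue of L₀ and there exists a corresponding eigenvector that is strictly positive at all interior vertices. -/
open Matrix BigOperators
open scoped Classical

/-- Weighted Laplacian of a weight function. -/
noncomputable def wLap {V : Type*} [Fintype V] [DecidableEq V] (w : V → V → ℝ) : Matrix V V ℝ :=
  Matrix.diagonal (fun v => ∑ u, w v u) - Matrix.of w

/-- The `k`-th smallest eigenvalue of a real matrix (0 if not Hermitian / out of range). -/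
noncomputable def kthEig {W : Type*} [Fintype W] [DecidableEq W] (A : Matrix W W ℝ) (k : ℕ) : ℝ :=
  if hA : A.IsHermitian then
    if h : k < Fintype.card W then
      (let g : Fin (Fintype.card W) → ℝ := hA.eigenvalues ∘ (Fintype.equivFin W).symm
       (g ∘ Tuple.sort g) ⟨k, h⟩)
    else 0
  else 0

noncomputable def minEig {W : Type*} [Fintype W] [DecidableEq W] (A : Matrix W W ℝ) : ℝ := kthEig A 0

/-- algebraic connectivity of a simple graph -/
noncomputable def algConn {V : Type*} [Fintype V] [DecidableEq V] (G : SimpleGraph V) : ℝ :=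
  kthEig (G.lapMatrix ℝ) 1

/-- Dirichlet matrix: weighted Laplacian restricted to an interior set `S`. -/
noncomputable def dirichletMatrix {V : Type*} [Fintype V] [DecidableEq V]
    (w : V → V → ℝ) (S : Set V) : Matrix S S ℝ :=
  (wLap w).submatrix Subtype.val Subtype.val

noncomputable def degSeq {V : Type*} [Fintype V] [DecidableEq V] (G : SimpleGraph V) : Multiset ℕ :=
  Finset.univ.val.map (fun v => G.degree v)

/-!
Off the diagonal the Dirichlet matrix `L₀` has the entries `-w u v ≤ 0`, so
`|x| ⬝ L₀ |x| ≤ x ⬝ L₀ x` for every `x`. Hence the absolute value of a first eigenvector again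
attains the minimum `ν` of the Rayleigh quotient, and is therefore again a first eigenvector.
At a zero of a nonnegative eigenvector the eigen-equation forces all neighbours to vanish, so by
connectedness such an eigenvector is either zero or strictly positive. For simplicity, given a
positive first eigenvector `f` and another one `g`, the eigenvector `g - (g i₀ / f i₀) • f`
vanishes at `i₀`, and so does its absolute value, which is then identically zero.
-/

namespace Matrix

variable {n : Type*} [Fintype n]

section Spectrum

variable [DecidableEq n] {A : Matrix n n ℝ}

lemma IsHermitian.minEig_eq_sorted (hA : A.IsHermitian) (hn : 0 < Fintype.card n) :
    minEig A = (hA.eigenvalues ∘ (Fintype.equivFin n).symm ∘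
      Tuple.sort (hA.eigenvalues ∘ (Fintype.equivFin n).symm)) ⟨0, hn⟩ := by
  simp only [minEig, kthEig, dif_pos hA, dif_pos hn]
  rfl

lemma IsHermitian.minEig_le_eigenvalues (hA : A.IsHermitian) (i : n) :
    minEig A ≤ hA.eigenvalues i := by
  have hn : 0 < Fintype.card n := Fintype.card_pos_iff.mpr ⟨i⟩
  set g := hA.eigenvalues ∘ (Fintype.equivFin n).symm
  calc minEig A = (g ∘ Tuple.sort g) ⟨0, hn⟩ := hA.minEig_eq_sorted hn
    _ ≤ (g ∘ Tuple.sort g) ((Tuple.sort g).symm (Fintype.equivFin n i)) :=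
      Tuple.monotone_sort g (Nat.zero_le _)
    _ = hA.eigenvalues i := by simp [g]

lemma IsHermitian.exists_eigenvalues_eq_minEig (hA : A.IsHermitian) [Nonempty n] :
    ∃ i, hA.eigenvalues i = minEig A :=
  ⟨_, (hA.minEig_eq_sorted Fintype.card_pos).symm⟩

lemma IsHermitian.posSemidef_sub_smul_one (hA : A.IsHermitian) {c : ℝ}
    (hc : ∀ i, c ≤ hA.eigenvalues i) :
    (A - c • 1).PosSemidef := by
  have hspec : A - c • 1 = Unitary.conjStarAlgAut ℝ _ hA.eigenvectorUnitary
      (diagonal fun i => hA.eigenvalues i - c) := by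
    conv_lhs => rw [hA.spectral_theorem]
    rw [show (diagonal fun i => hA.eigenvalues i - c) =
        diagonal (RCLike.ofReal ∘ hA.eigenvalues) - c • 1 by
      ext i j; by_cases h : i = j <;> simp [h], map_sub, map_smul, map_one]
  rw [hspec]
  simp [Unitary.isUnit_coe.posSemidef_star_right_conjugate_iff, posSemidef_diagonal_iff, hc]

lemma IsHermitian.mulVec_eq_smul_of_dotProduct_mulVec_le (hA : A.IsHermitian) {c : ℝ}
    (hc : ∀ i, c ≤ hA.eigenvalues i) {x : n → ℝ} (hx : x ⬝ᵥ A *ᵥ x ≤ c * (x ⬝ᵥ x)) :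
    A *ᵥ x = c • x := by
  have hpsd := hA.posSemidef_sub_smul_one hc
  have hquad : x ⬝ᵥ (A - c • 1) *ᵥ x = x ⬝ᵥ A *ᵥ x - c * (x ⬝ᵥ x) := by
    simp [sub_mulVec, dotProduct_sub, smul_mulVec]
  have hzero : x ⬝ᵥ (A - c • 1) *ᵥ x = 0 :=
    le_antisymm (by linarith) (by simpa using hpsd.dotProduct_mulVec_nonneg x)
  have := (hpsd.dotProduct_mulVec_zero_iff x).mp (by simpa using hzero)
  simpa [sub_mulVec, sub_eq_zero, smul_mulVec] using this

end Spectrum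

section NonposOffDiag

variable {A : Matrix n n ℝ}

lemma dotProduct_mulVec_abs_le (hZ : ∀ i j, i ≠ j → A i j ≤ 0) (x : n → ℝ) :
    |x| ⬝ᵥ A *ᵥ |x| ≤ x ⬝ᵥ A *ᵥ x := by
  simp only [dotProduct, mulVec, Finset.mul_sum, Pi.abs_apply]
  refine Finset.sum_le_sum fun i _ => Finset.sum_le_sum fun j _ => ?_
  rw [mul_left_comm, mul_left_comm (x i)]
  rcases eq_or_ne i j with rfl | hij
  · rw [abs_mul_abs_self]
  · exact mul_le_mul_of_nonpos_left (by rw [← abs_mul]; exact le_abs_self _) (hZ i j hij)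

lemma apply_eq_zero_of_mulVec_eq_smul (hZ : ∀ i j, i ≠ j → A i j ≤ 0) {c : ℝ} {x : n → ℝ}
    (hx₀ : 0 ≤ x) (hx : A *ᵥ x = c • x) {i j : n} (hi : x i = 0) (hij : A i j < 0) :
    x j = 0 := by
  have hsum : ∑ k, A i k * x k = 0 := by
    simpa [hi, mulVec, dotProduct] using congrFun hx i
  have hterm : ∀ k ∈ Finset.univ, A i k * x k ≤ 0 := fun k _ => by
    rcases eq_or_ne i k with rfl | hik
    · simp [hi]
    · exact mul_nonpos_of_nonpos_of_nonneg (hZ i k hik) (hx₀ k)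
  have := (Finset.sum_eq_zero_iff_of_nonpos hterm).mp hsum j (Finset.mem_univ j)
  exact (mul_eq_zero.mp this).resolve_left hij.ne

lemma eq_zero_of_mulVec_eq_smul_of_preconnected (hZ : ∀ i j, i ≠ j → A i j ≤ 0)
    {G : SimpleGraph n} (hG : G.Preconnected) (hGA : ∀ i j, G.Adj i j → A i j < 0)
    {c : ℝ} {x : n → ℝ} (hx₀ : 0 ≤ x) (hx : A *ᵥ x = c • x) {i : n} (hi : x i = 0) :
    x = 0 := by
  funext j
  induction (SimpleGraph.reachable_iff_reflTransGen i j).mp (hG i j) with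
  | refl => exact hi
  | tail _ hadj ih => exact apply_eq_zero_of_mulVec_eq_smul hZ hx₀ hx ih (hGA _ _ hadj)

lemma pos_of_mulVec_eq_smul_of_preconnected (hZ : ∀ i j, i ≠ j → A i j ≤ 0)
    {G : SimpleGraph n} (hG : G.Preconnected) (hGA : ∀ i j, G.Adj i j → A i j < 0)
    {c : ℝ} {x : n → ℝ} (hx₀ : 0 ≤ x) (hx_ne : x ≠ 0) (hx : A *ᵥ x = c • x) (i : n) :
    0 < x i :=
  (hx₀ i).lt_of_ne fun hi =>
    hx_ne (eq_zero_of_mulVec_eq_smul_of_preconnected hZ hG hGA hx₀ hx hi.symm)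

end NonposOffDiag

section PerronFrobenius

variable [DecidableEq n] {A : Matrix n n ℝ}

lemma IsHermitian.mulVec_abs_eq_minEig_smul (hA : A.IsHermitian)
    (hZ : ∀ i j, i ≠ j → A i j ≤ 0) {x : n → ℝ} (hx : A *ᵥ x = minEig A • x) :
    A *ᵥ |x| = minEig A • |x| := by
  refine hA.mulVec_eq_smul_of_dotProduct_mulVec_le hA.minEig_le_eigenvalues ?_
  have hnorm : |x| ⬝ᵥ |x| = x ⬝ᵥ x := Finset.sum_congr rfl fun i _ => abs_mul_abs_self (x i)
  calc |x| ⬝ᵥ A *ᵥ |x| ≤ x ⬝ᵥ A *ᵥ x := dotProduct_mulVec_abs_le hZ x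
    _ = minEig A * (|x| ⬝ᵥ |x|) := by rw [hx, dotProduct_smul, smul_eq_mul, hnorm]

lemma IsHermitian.eq_smul_of_mulVec_eq_minEig_smul (hA : A.IsHermitian)
    (hZ : ∀ i j, i ≠ j → A i j ≤ 0)
    {G : SimpleGraph n} (hG : G.Preconnected) (hGA : ∀ i j, G.Adj i j → A i j < 0)
    {f : n → ℝ} (hf : ∀ i, 0 < f i) (hfA : A *ᵥ f = minEig A • f)
    {g : n → ℝ} (hgA : A *ᵥ g = minEig A • g) (i₀ : n) :
    g = (g i₀ / f i₀) • f := by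
  set h := g - (g i₀ / f i₀) • f
  have hhA : A *ᵥ h = minEig A • h := by
    rw [mulVec_sub, mulVec_smul, hgA, hfA, smul_sub, smul_comm]
  have hh₀ : |h| i₀ = 0 := by
    simp [h, div_mul_cancel₀ _ (hf i₀).ne']
  have := eq_zero_of_mulVec_eq_smul_of_preconnected hZ hG hGA (abs_nonneg h)
    (hA.mulVec_abs_eq_minEig_smul hZ hhA) hh₀
  exact sub_eq_zero.mp ((Pi.abs_eq_zero h).mp this)

theorem IsHermitian.exists_pos_eigenvector_minEig (hA : A.IsHermitian)
    (hZ : ∀ i j, i ≠ j → A i j ≤ 0)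
    {G : SimpleGraph n} (hG : G.Connected) (hGA : ∀ i j, G.Adj i j → A i j < 0) :
    ∃ f : n → ℝ, (∀ i, 0 < f i) ∧ A *ᵥ f = minEig A • f ∧
      ∀ g : n → ℝ, A *ᵥ g = minEig A • g → ∃ c : ℝ, g = c • f := by
  have : Nonempty n := hG.nonempty
  obtain ⟨i₀, hi₀⟩ := hA.exists_eigenvalues_eq_minEig
  set v : n → ℝ := ⇑(hA.eigenvectorBasis i₀)
  have hvA : A *ᵥ v = minEig A • v := hi₀ ▸ hA.mulVec_eigenvectorBasis i₀
  have hv_ne : v ≠ 0 := fun hv =>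
    hA.eigenvectorBasis.orthonormal.ne_zero i₀ (PiLp.ext (congrFun hv))
  have hf : ∀ i, 0 < |v| i :=
    pos_of_mulVec_eq_smul_of_preconnected hZ hG.preconnected hGA (abs_nonneg v)
      (mt (Pi.abs_eq_zero v).mp hv_ne) (hA.mulVec_abs_eq_minEig_smul hZ hvA)
  exact ⟨|v|, hf, hA.mulVec_abs_eq_minEig_smul hZ hvA, fun g hg =>
    ⟨_, hA.eq_smul_of_mulVec_eq_minEig_smul hZ hG.preconnected hGA hf
      (hA.mulVec_abs_eq_minEig_smul hZ hvA) hg i₀⟩⟩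

end PerronFrobenius

end Matrix

section Dirichlet

variable {V : Type*} [Fintype V] [DecidableEq V] {w : V → V → ℝ}

lemma isHermitian_wLap (hsym : ∀ u v, w u v = w v u) : (wLap w).IsHermitian :=
  (isHermitian_diagonal _).sub (by ext u v; simp [hsym])

lemma isHermitian_dirichletMatrix (hsym : ∀ u v, w u v = w v u) (S : Set V) :
    (dirichletMatrix w S).IsHermitian :=
  (isHermitian_wLap hsym).submatrix _

lemma dirichletMatrix_apply_of_ne {S : Set V} {u v : S} (huv : u ≠ v) :
    dirichletMatrix w S u v = -w u v := by
  simp [dirichletMatrix, wLap, Subtype.coe_ne_coe.mpr huv]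

lemma dirichletMatrix_neg_of_adj (hsym : ∀ u v, w u v = w v u) {S : Set V} {u v : S}
    (huv : ((SimpleGraph.fromRel fun u v => 0 < w u v).induce S).Adj u v) :
    dirichletMatrix w S u v < 0 := by
  simp only [SimpleGraph.comap_adj, SimpleGraph.fromRel_adj, Function.Embedding.coe_subtype,
    hsym (v : V), or_self] at huv
  rw [dirichletMatrix_apply_of_ne (Subtype.coe_ne_coe.mp huv.1), neg_neg_iff_pos]
  exact huv.2

end Dirichlet

theorem dirichlet_eig_simple_pos_eigenvector_general {V : Type*} [Fintype V] [DecidableEq V]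
    (w : V → V → ℝ) (S : Set V)
    (hsym : ∀ u v, w u v = w v u) (hnonneg : ∀ u v, 0 ≤ w u v)
    (hconn : ((SimpleGraph.fromRel (fun u v => 0 < w u v)).induce S).Connected) :
    ∃ f : S → ℝ, (∀ v, 0 < f v) ∧
      (dirichletMatrix w S) *ᵥ f = minEig (dirichletMatrix w S) • f ∧
      ∀ g : S → ℝ, (dirichletMatrix w S) *ᵥ g = minEig (dirichletMatrix w S) • g →
        ∃ c : ℝ, g = c • f :=
  (isHermitian_dirichletMatrix hsym S).exists_pos_eigenvector_minEig
    (fun _ _ huv => by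
      rw [dirichletMatrix_apply_of_ne huv, neg_nonpos]; exact hnonneg _ _)
    hconn (fun _ _ => dirichletMatrix_neg_of_adj hsym)

/-- if the interior subgraph is connected, the first Dirichlet
eigenvalue is simple and has an eigenvector strictly positive on the interior. -/
theorem dirichlet_eig_simple_pos_eigenvector {V : Type*} [Fintype V] [DecidableEq V]
    (w : V → V → ℝ) (S : Set V) (hS : S.Nonempty)
    (hsym : ∀ u v, w u v = w v u) (hnonneg : ∀ u v, 0 ≤ w u v)
    (hloop : ∀ v, w v v = 0)
    (hbd : ∀ u ∉ S, ∀ v ∉ S, w u v = 0)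
    (hbe : ∃ u ∈ S, ∃ v ∉ S, 0 < w u v)
    (hconn : ((SimpleGraph.fromRel (fun u v => 0 < w u v)).induce S).Connected) :
    ∃ f : S → ℝ, (∀ v, 0 < f v) ∧
      (dirichletMatrix w S) *ᵥ f = minEig (dirichletMatrix w S) • f ∧
      ∀ g : S → ℝ, (dirichletMatrix w S) *ᵥ g = minEig (dirichletMatrix w S) • g →
        ∃ c : ℝ, g = c • f :=
  dirichlet_eig_simple_pos_eigenvector_general w S hsym hnonneg hconn
end

section
/- Let T₀ be a tree with a single boundary vertex v₀ and let f be a nonnegative eigenvector of the first Dirichlet eigenvalue ν(T₀). Then along every simple path in T₀ starting at v₀, the values of f (with f(v₀)=0) are either strictly increasing or identically zero. -/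
/-! Away from the boundary, `f` satisfies `Δf = ν f`, so summing over the branch `A` cut off by an
edge `ab` of the tree (with `v₀ ∉ A`) collapses, by antisymmetry of the flux, to the single
edge term: `ν ∑_A f = w a b (f a - f b)`. The first edge of a path from `v₀` forces `ν > 0`
unless `f` vanishes there; then every edge, read towards `v₀`, strictly decreases `f`. A zero
of `f` at an interior vertex propagates to all its neighbours, hence along the whole path. -/

open Matrix BigOperators
open scoped Classical

open SimpleGraph

section WeightedLaplacian

variable {V : Type*} [Fintype V] {w : V → V → ℝ}

theorem eq_zero_of_laplacian_eq_of_eq_zero {f : V → ℝ} {ν : ℝ} {x y : V}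
    (hw : ∀ z, 0 ≤ w x z) (hf : ∀ z, 0 ≤ f z) (hx : ∑ z, w x z * (f x - f z) = ν * f x)
    (hfx : f x = 0) (hxy : 0 < w x y) : f y = 0 := by
  have hsum : ∑ z, w x z * f z = 0 := by
    simpa only [hfx, zero_sub, mul_neg, Finset.sum_neg_distrib, mul_zero, neg_eq_zero] using hx
  have hterm := (Finset.sum_eq_zero_iff_of_nonneg fun z _ => mul_nonneg (hw z) (hf z)).1 hsum y
    (Finset.mem_univ y)
  exact (mul_eq_zero.1 hterm).resolve_left hxy.ne'

variable [DecidableEq V]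

theorem wLap_mulVec_apply (g : V → ℝ) (x : V) :
    (wLap w *ᵥ g) x = ∑ y, w x y * (g x - g y) := by
  rw [wLap, sub_mulVec, Pi.sub_apply, mulVec_diagonal]
  simp only [mulVec, dotProduct, of_apply, mul_sub, Finset.sum_sub_distrib, Finset.sum_mul]

theorem dirichletMatrix_mulVec_apply {S : Set V} [DecidablePred (· ∈ S)] {g : V → ℝ}
    (hg : ∀ x ∉ S, g x = 0) (x : S) :
    (dirichletMatrix w S *ᵥ fun a => g a) x = (wLap w *ᵥ g) x := by
  simp only [mulVec, dotProduct, dirichletMatrix, submatrix_apply]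
  exact (Finset.sum_congr_set S _ _ (fun _ _ => rfl) fun x hx => by rw [hg x hx, mul_zero]).symm

theorem laplacian_eq_of_dirichletMatrix_mulVec_eq {S : Set V} [DecidablePred (· ∈ S)]
    {f : V → ℝ} {ν : ℝ} (hf : ∀ x ∉ S, f x = 0)
    (heig : dirichletMatrix w S *ᵥ (fun a => f a.1) = ν • fun a => f a.1) {x : V} (hx : x ∈ S) :
    ∑ y, w x y * (f x - f y) = ν * f x := by
  rw [← wLap_mulVec_apply, ← dirichletMatrix_mulVec_apply hf ⟨x, hx⟩, heig]
  rfl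

theorem sum_laplacian_eq_sum_compl (hsym : ∀ u v, w u v = w v u) (A : Finset V) (g : V → ℝ) :
    ∑ x ∈ A, ∑ y, w x y * (g x - g y) = ∑ x ∈ A, ∑ y ∈ Aᶜ, w x y * (g x - g y) := by
  have hinner : ∑ x ∈ A, ∑ y ∈ A, w x y * (g x - g y) = 0 := by
    have hswap := Finset.sum_comm (s := A) (t := A) (f := fun x y => w x y * (g x - g y))
    have hneg : ∑ y ∈ A, ∑ x ∈ A, w x y * (g x - g y)
        = -∑ x ∈ A, ∑ y ∈ A, w x y * (g x - g y) := by
      simp only [← Finset.sum_neg_distrib]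
      exact Finset.sum_congr rfl fun x _ => Finset.sum_congr rfl fun y _ => by rw [hsym y x]; ring
    linarith
  calc ∑ x ∈ A, ∑ y, w x y * (g x - g y)
      = ∑ x ∈ A, (∑ y ∈ A, w x y * (g x - g y) + ∑ y ∈ Aᶜ, w x y * (g x - g y)) := by
        simp only [Finset.sum_add_sum_compl]
    _ = ∑ x ∈ A, ∑ y ∈ Aᶜ, w x y * (g x - g y) := by
        rw [Finset.sum_add_distrib, hinner, zero_add]

end WeightedLaplacian

namespace SimpleGraph

variable {V : Type*} {T : SimpleGraph V} {w : V → V → ℝ} {f : V → ℝ} {ν : ℝ} {v₀ a b : V}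

theorem weight_nonneg (hpos : ∀ u v, T.Adj u v ↔ 0 < w u v)
    (hzero : ∀ u v, ¬ T.Adj u v → w u v = 0) (u v : V) : 0 ≤ w u v := by
  by_cases h : T.Adj u v
  · exact ((hpos u v).1 h).le
  · exact (hzero u v h).ge

variable [Fintype V]

theorem Walk.forall_eq_zero_of_exists_eq_zero (hpos : ∀ u v, T.Adj u v ↔ 0 < w u v)
    (hw : ∀ u v, 0 ≤ w u v) (hf : ∀ x, 0 ≤ f x)
    (heq : ∀ x, x ≠ v₀ → ∑ y, w x y * (f x - f y) = ν * f x) (q : T.Walk a b)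
    (hq : v₀ ∉ q.support) (h : ∃ x ∈ q.support, f x = 0) : ∀ x ∈ q.support, f x = 0 := by
  induction q with
  | nil => simpa using h
  | @cons a b c hab q ih =>
    simp only [support_cons, List.mem_cons, not_or, exists_eq_or_imp, forall_eq_or_imp] at hq h ⊢
    have spread : ∀ {x y}, T.Adj x y → x ≠ v₀ → f x = 0 → f y = 0 := fun hxy hx hfx =>
      eq_zero_of_laplacian_eq_of_eq_zero (hw _) hf (heq _ hx) hfx ((hpos _ _).1 hxy)
    have hb : b ≠ v₀ := fun h => hq.2 (h ▸ q.start_mem_support)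
    obtain ⟨ha, hb⟩ : f a = 0 ∧ f b = 0 := by
      rcases h with ha | hq'
      · exact ⟨ha, spread hab (Ne.symm hq.1) ha⟩
      · have hb0 := ih hq.2 hq' b q.start_mem_support
        exact ⟨spread hab.symm hb hb0, hb0⟩
    exact ⟨ha, ih hq.2 ⟨b, q.start_mem_support, hb⟩⟩

noncomputable def branch (T : SimpleGraph V) (a b : V) : Finset V :=
  Finset.univ.filter fun x => (T.deleteEdges {s(a, b)}).Reachable a x

@[simp]
theorem mem_branch {x : V} : x ∈ T.branch a b ↔ (T.deleteEdges {s(a, b)}).Reachable a x := by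
  simp [branch]

theorem self_mem_branch : a ∈ T.branch a b :=
  mem_branch.2 (Reachable.refl a)

theorem IsAcyclic.right_notMem_branch (hT : T.IsAcyclic) (hab : T.Adj a b) :
    b ∉ T.branch a b :=
  mem_branch.not.2 (isAcyclic_iff_forall_adj_isBridge.1 hT hab)

theorem IsAcyclic.eq_of_adj_of_mem_branch (hT : T.IsAcyclic) (hab : T.Adj a b) {x y : V}
    (hx : x ∈ T.branch a b) (hy : y ∉ T.branch a b) (hxy : T.Adj x y) : x = a ∧ y = b := by
  have hedge : s(x, y) = s(a, b) := by
    by_contra hne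
    exact hy (mem_branch.2 ((mem_branch.1 hx).trans (Adj.reachable (by simp [hxy, hne]))))
  rcases Sym2.eq_iff.1 hedge with h | ⟨rfl, rfl⟩
  · exact h
  · exact absurd hx (hT.right_notMem_branch hab)

variable [DecidableEq V]

theorem IsAcyclic.sum_branch_compl (hT : T.IsAcyclic) (hzero : ∀ u v, ¬ T.Adj u v → w u v = 0)
    (hab : T.Adj a b) (g : V → ℝ) :
    ∑ x ∈ T.branch a b, ∑ y ∈ (T.branch a b)ᶜ, w x y * (g x - g y) = w a b * (g a - g b) := by
  have hvanish : ∀ x ∈ T.branch a b, ∀ y ∈ (T.branch a b)ᶜ, ¬ (x = a ∧ y = b) → w x y = 0 :=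
    fun x hx y hy hne => hzero x y fun hxy =>
      hne (hT.eq_of_adj_of_mem_branch hab hx (Finset.mem_compl.1 hy) hxy)
  rw [Finset.sum_eq_single_of_mem a self_mem_branch, Finset.sum_eq_single_of_mem b
    (Finset.mem_compl.2 (hT.right_notMem_branch hab))]
  · intro y hy hyb
    rw [hvanish a self_mem_branch y hy fun h => hyb h.2, zero_mul]
  · intro x hx hxa
    exact Finset.sum_eq_zero fun y hy => by rw [hvanish x hx y hy fun h => hxa h.1, zero_mul]

theorem IsAcyclic.mul_sum_branch_eq (hT : T.IsAcyclic) (hsym : ∀ u v, w u v = w v u)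
    (hzero : ∀ u v, ¬ T.Adj u v → w u v = 0)
    (heq : ∀ x, x ≠ v₀ → ∑ y, w x y * (f x - f y) = ν * f x)
    (hab : T.Adj a b) (hv₀ : v₀ ∉ T.branch a b) :
    ν * ∑ x ∈ T.branch a b, f x = w a b * (f a - f b) := by
  calc ν * ∑ x ∈ T.branch a b, f x = ∑ x ∈ T.branch a b, ∑ y, w x y * (f x - f y) := by
        rw [Finset.mul_sum]
        exact Finset.sum_congr rfl fun x hx => (heq x (ne_of_mem_of_not_mem hx hv₀)).symm
    _ = w a b * (f a - f b) := by
        rw [sum_laplacian_eq_sum_compl hsym, hT.sum_branch_compl hzero hab]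

theorem IsAcyclic.eigenvalue_pos (hT : T.IsAcyclic) (hsym : ∀ u v, w u v = w v u)
    (hpos : ∀ u v, T.Adj u v ↔ 0 < w u v) (hzero : ∀ u v, ¬ T.Adj u v → w u v = 0)
    (hf : ∀ x, 0 ≤ f x) (heq : ∀ x, x ≠ v₀ → ∑ y, w x y * (f x - f y) = ν * f x)
    (hav₀ : T.Adj a v₀) (hfv₀ : f v₀ = 0) (ha : 0 < f a) : 0 < ν := by
  have hcut := hT.mul_sum_branch_eq hsym hzero heq hav₀ (hT.right_notMem_branch hav₀)
  rw [hfv₀, sub_zero] at hcut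
  have hflux : 0 < ν * ∑ x ∈ T.branch a v₀, f x := hcut ▸ mul_pos ((hpos a v₀).1 hav₀) ha
  exact pos_of_mul_pos_left hflux (Finset.sum_nonneg fun x _ => hf x)

theorem IsAcyclic.lt_of_adj_of_reachable (hT : T.IsAcyclic) (hsym : ∀ u v, w u v = w v u)
    (hpos : ∀ u v, T.Adj u v ↔ 0 < w u v) (hzero : ∀ u v, ¬ T.Adj u v → w u v = 0)
    (hf : ∀ x, 0 ≤ f x) (heq : ∀ x, x ≠ v₀ → ∑ y, w x y * (f x - f y) = ν * f x)
    (hν : 0 < ν) (hab : T.Adj a b) (hbv₀ : (T.deleteEdges {s(a, b)}).Reachable b v₀)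
    (ha : 0 < f a) : f b < f a := by
  have hv₀ : v₀ ∉ T.branch a b := fun h =>
    hT.right_notMem_branch hab (mem_branch.2 ((mem_branch.1 h).trans hbv₀.symm))
  have hcut := hT.mul_sum_branch_eq hsym hzero heq hab hv₀
  have hsum : f a ≤ ∑ x ∈ T.branch a b, f x :=
    Finset.single_le_sum (fun x _ => hf x) self_mem_branch
  have hflux : 0 < w a b * (f a - f b) := hcut ▸ mul_pos hν (ha.trans_le hsum)
  exact sub_pos.1 (pos_of_mul_pos_right hflux ((hpos a b).1 hab).le)

theorem IsAcyclic.isChain_gt_of_isPath (hT : T.IsAcyclic) (hsym : ∀ u v, w u v = w v u)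
    (hpos : ∀ u v, T.Adj u v ↔ 0 < w u v) (hzero : ∀ u v, ¬ T.Adj u v → w u v = 0)
    (hf : ∀ x, 0 ≤ f x) (heq : ∀ x, x ≠ v₀ → ∑ y, w x y * (f x - f y) = ν * f x)
    (hν : 0 < ν) : ∀ {a : V} (q : T.Walk a v₀), q.IsPath →
      (∀ x ∈ q.support, x ≠ v₀ → 0 < f x) → (q.support.map f).IsChain (· > ·)
  | _, .nil, _, _ => List.isChain_singleton _
  | a, .cons (v := b) hab q, hq, hqpos => by
    obtain ⟨hq, haq⟩ := (Walk.cons_isPath_iff hab q).1 hq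
    have hav₀ : a ≠ v₀ := fun h => haq (h ▸ q.end_mem_support)
    have hbv₀ : (T.deleteEdges {s(a, b)}).Reachable b v₀ :=
      (q.toDeleteEdge s(a, b) fun he => haq (q.fst_mem_support_of_mem_edges he)).reachable
    have hlt := hT.lt_of_adj_of_reachable hsym hpos hzero hf heq hν hab hbv₀
      (hqpos a (q.support_cons hab ▸ List.mem_cons_self) hav₀)
    rw [Walk.support_cons, List.map_cons, ← q.cons_tail_support, List.map_cons,
      List.isChain_cons_cons, ← List.map_cons, q.cons_tail_support]
    exact ⟨hlt, hT.isChain_gt_of_isPath hsym hpos hzero hf heq hν q hq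
      fun x hx => hqpos x (List.mem_cons_of_mem a hx)⟩

end SimpleGraph

/-- a nonnegative first Dirichlet eigenvector of a tree with the
single boundary vertex `v₀` is, along every simple path starting at `v₀`,
either strictly increasing or identically zero. -/
theorem dirichlet_eigenvector_increasing_on_paths {V : Type*} [Fintype V] [DecidableEq V]
    (T : SimpleGraph V) (hT : T.IsTree) (v₀ : V)
    (w : V → V → ℝ) (hsym : ∀ u v, w u v = w v u)
    (hpos : ∀ u v, T.Adj u v ↔ 0 < w u v)
    (hzero : ∀ u v, ¬ T.Adj u v → w u v = 0)
    (f : V → ℝ) (hv₀ : f v₀ = 0) (hnn : ∀ v, 0 ≤ f v)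
    (heig : (dirichletMatrix w ({v₀}ᶜ : Set V)) *ᵥ (fun a => f a.1) =
      minEig (dirichletMatrix w ({v₀}ᶜ : Set V)) • (fun a => f a.1)) :
    ∀ (u : V) (p : T.Walk v₀ u), p.IsPath →
      (p.support.map f).Chain' (· < ·) ∨ ∀ x ∈ p.support, f x = 0 := by
  have heq : ∀ x, x ≠ v₀ → ∑ y, w x y * (f x - f y) =
      minEig (dirichletMatrix w ({v₀}ᶜ : Set V)) * f x := fun x hx =>
    laplacian_eq_of_dirichletMatrix_mulVec_eq (S := {v₀}ᶜ) (fun y hy => by simp_all) heig hx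
  intro u p hp
  by_cases hvanish : ∃ x ∈ p.support, x ≠ v₀ ∧ f x = 0
  · right
    obtain ⟨x, hx, hxv₀, hfx⟩ := hvanish
    cases p with
    | nil => exact absurd (List.mem_singleton.1 hx) hxv₀
    | cons hab q =>
      rw [Walk.support_cons, List.mem_cons] at hx
      rw [Walk.support_cons, List.forall_mem_cons]
      exact ⟨hv₀, q.forall_eq_zero_of_exists_eq_zero hpos (weight_nonneg hpos hzero) hnn heq
        ((Walk.cons_isPath_iff hab q).1 hp).2 ⟨x, hx.resolve_left hxv₀, hfx⟩⟩
  · left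
    push Not at hvanish
    have hppos : ∀ x ∈ p.support, x ≠ v₀ → 0 < f x := fun x hx hxv₀ =>
      (hnn x).lt_of_ne' (hvanish x hx hxv₀)
    cases p with
    | nil => exact List.isChain_singleton _
    | cons hab q =>
      have hν := hT.isAcyclic.eigenvalue_pos hsym hpos hzero hnn heq hab.symm hv₀
        (hppos _ (by simp) hab.ne.symm)
      have hchain := hT.isAcyclic.isChain_gt_of_isPath hsym hpos hzero hnn heq hν _ hp.reverse
        fun x hx => hppos x (by rwa [Walk.support_reverse, List.mem_reverse] at hx)
      rwa [Walk.support_reverse, List.map_reverse, List.isChain_reverse] at hchain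
end
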